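/- Each persistence landscape function Λ^μ_i is 1-Lipschitz: for a finite barcode, |Λ^μ_i(s) − Λ^μ_i(t)| ≤ |s − t| for all s, t ∈ ℝ, where Λ^μ_i(t) is the i-th largest value (with multiplicity) among {Δ([p,q], t) : (p,q) ∈ B}. -/

import Mathlib

/-!
Each tent function is 1-Lipschitz, and taking the `k`-th smallest element of a family of reals
is 1-Lipschitz for the sup distance: in a sorted list `l[k] ≤ c` iff more than `k` entries are
`≤ c`, and moving every value by at most `ε` turns entries `≤ c` into entries `≤ c + ε`.
Both landscape values are read at the same position of sorted lists of the same length, the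
number of bars counted with multiplicity.
-/

/-- The tent function of an interval. -/
noncomputable def tent (pq : ℝ × ℝ) (t : ℝ) : ℝ := max (min (t - pq.1) (pq.2 - t)) 0

/-- The i-th landscape function: the i-th largest element (counted with multiplicity)
of the multiset of tent-function values, with the convention that it is 0 when the
index exceeds the number of bars. -/
noncomputable def landscape (B : Finset (ℝ × ℝ)) (μ : ℝ × ℝ → ℕ) (i : ℕ) (t : ℝ) : ℝ :=
  let l := Multiset.sort (B.val.bind fun pq => Multiset.replicate (μ pq) (tent pq t)) (· ≤ ·)
  if 1 ≤ i ∧ i ≤ l.length then l.getD (l.length - i) 0 else 0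

theorem abs_tent_sub_tent_le (pq : ℝ × ℝ) (s t : ℝ) : |tent pq s - tent pq t| ≤ |s - t| := by
  unfold tent
  refine (abs_max_sub_max_le_abs _ _ _).trans <| (abs_min_sub_min_le_max _ _ _ _).trans ?_
  rw [sub_sub_sub_cancel_right, sub_sub_sub_cancel_left, abs_sub_comm t s, max_self]

theorem List.Pairwise.getElem_le_iff_lt_countP {α : Type*} [LinearOrder α] {l : List α}
    (hl : l.Pairwise (· ≤ ·)) {k : ℕ} (hk : k < l.length) {c : α} :
    l[k] ≤ c ↔ k < l.countP (· ≤ c) := by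
  constructor
  · intro hkc
    have hprefix : ∀ x ∈ l.take (k + 1), x ≤ c := by
      intro x hx
      obtain ⟨j, hj, rfl⟩ := List.mem_take_iff_getElem.1 hx
      exact (hl.rel_get_of_le (a := ⟨j, by omega⟩) (b := ⟨k, hk⟩) (by simp; omega)).trans hkc
    calc k < (l.take (k + 1)).countP (· ≤ c) := by
          rw [List.countP_eq_length.2 (by simpa using hprefix)]; simp; omega
      _ ≤ l.countP (· ≤ c) := (List.take_sublist _ _).countP_le
  · intro hcount
    by_contra! hck
    have hsuffix : (l.drop k).countP (· ≤ c) = 0 := by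
      refine List.countP_eq_zero.2 fun x hx => ?_
      obtain ⟨j, hj, rfl⟩ := List.mem_iff_getElem.1 hx
      rw [List.getElem_drop]
      have := hl.rel_get_of_le (a := ⟨k, hk⟩) (b := ⟨k + j, by simp at hj; omega⟩) (by simp)
      simp only [List.get_eq_getElem] at this
      simpa using hck.trans_le this
    have hprefix : (l.take k).countP (· ≤ c) ≤ k :=
      List.countP_le_length.trans (List.length_take_le _ _)
    rw [← List.take_append_drop k l, List.countP_append, hsuffix] at hcount
    omega

namespace Multiset

theorem countP_sort {α : Type*} [LinearOrder α] (s : Multiset α) (p : α → Prop)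
    [DecidablePred p] : s.sort.countP p = s.countP p := by
  rw [← coe_countP, sort_eq]

theorem countP_map_le_countP_map {α β : Type*} (M : Multiset α) {f g : α → β}
    {p q : β → Prop} [DecidablePred p] [DecidablePred q] (h : ∀ a ∈ M, p (f a) → q (g a)) :
    (M.map f).countP p ≤ (M.map g).countP q := by
  induction M using Quot.ind with | mk l
  simp only [quot_mk_to_coe'', map_coe, coe_countP, List.countP_map]
  exact List.countP_mono_left fun a ha => by simpa using h a ha

theorem sort_map_getElem_le_add {α : Type*} (M : Multiset α) {f g : α → ℝ} {ε : ℝ}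
    (hfg : ∀ a ∈ M, f a ≤ g a + ε) {k : ℕ} (hf : k < (M.map f).sort.length)
    (hg : k < (M.map g).sort.length) :
    (M.map f).sort[k] ≤ (M.map g).sort[k] + ε := by
  set c := (M.map g).sort[k]
  have hcount := ((M.map g).pairwise_sort _).getElem_le_iff_lt_countP hg |>.1 le_rfl
  refine ((M.map f).pairwise_sort _).getElem_le_iff_lt_countP hf |>.2 (hcount.trans_le ?_)
  rw [countP_sort, countP_sort]
  exact M.countP_map_le_countP_map fun a ha hga => by linarith [hfg a ha]

theorem abs_sort_map_getD_sub_le {α : Type*} (M : Multiset α) {f g : α → ℝ} {ε : ℝ}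
    (hε : 0 ≤ ε) (hfg : ∀ a ∈ M, |f a - g a| ≤ ε) (n : ℕ) :
    |(M.map f).sort.getD n 0 - (M.map g).sort.getD n 0| ≤ ε := by
  by_cases hn : n < card M
  · have hf : n < (M.map f).sort.length := by simpa using hn
    have hg : n < (M.map g).sort.length := by simpa using hn
    rw [List.getD_eq_getElem _ _ hf, List.getD_eq_getElem _ _ hg, abs_sub_le_iff]
    constructor
    · linarith [M.sort_map_getElem_le_add (fun a ha => by linarith [(abs_le.1 (hfg a ha)).2]) hf hg]
    · linarith [M.sort_map_getElem_le_add (fun a ha => by linarith [(abs_le.1 (hfg a ha)).1]) hg hf]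
  · rw [List.getD_eq_default _ _ (by simpa using hn), List.getD_eq_default _ _ (by simpa using hn)]
    simpa using hε

end Multiset

def bars (B : Finset (ℝ × ℝ)) (μ : ℝ × ℝ → ℕ) : Multiset (ℝ × ℝ) :=
  B.val.bind fun pq => Multiset.replicate (μ pq) pq

theorem landscape_eq (B : Finset (ℝ × ℝ)) (μ : ℝ × ℝ → ℕ) (i : ℕ) (t : ℝ) :
    landscape B μ i t = if 1 ≤ i ∧ i ≤ Multiset.card (bars B μ) then
      ((bars B μ).map (tent · t)).sort.getD (Multiset.card (bars B μ) - i) 0 else 0 := by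
  have hvalues : (B.val.bind fun pq => Multiset.replicate (μ pq) (tent pq t)) =
      (bars B μ).map (tent · t) := by
    simp [bars, Multiset.map_bind, Multiset.map_replicate]
  simp only [landscape, hvalues, Multiset.length_sort, Multiset.card_map]

theorem landscape_lipschitz_general (B : Finset (ℝ × ℝ)) (μ : ℝ × ℝ → ℕ)
    (i : ℕ) (s t : ℝ) :
    |landscape B μ i s - landscape B μ i t| ≤ |s - t| := by
  rw [landscape_eq, landscape_eq]
  split_ifs
  · exact Multiset.abs_sort_map_getD_sub_le _ (abs_nonneg _)
      (fun pq _ => abs_tent_sub_tent_le pq s t) _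
  · simp

/-- Each persistence landscape function is 1-Lipschitz. -/
theorem landscape_lipschitz (B : Finset (ℝ × ℝ)) (μ : ℝ × ℝ → ℕ)
    (hμ : ∀ pq ∈ B, 0 < μ pq) (hB : ∀ pq ∈ B, pq.1 ≤ pq.2)
    (i : ℕ) (hi : 1 ≤ i) (s t : ℝ) :
    |landscape B μ i s - landscape B μ i t| ≤ |s - t| :=
  landscape_lipschitz_general B μ i s t
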